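/- Fix 0 < a' = c' < b' with 2a' + b' = 1. For each N, let ψ_N be the Perron eigenvector (normalized probability distribution) of the 1-locus operator Sel·Mut_{a'a'} on {1,...,N}, with eigenvalue λ_N. Then lim_{N→∞} λ_N / N = 1. -/

import Mathlib

open Matrix Filter

/-!
Write `selMut1 = D * M` with `D = diag(1, …, N)` and `M = mut1` the symmetric mutation matrix.
Then `D⁻¹ ψ` is a positive left eigenvector, and pairing with it gives the Collatz–Wielandt bounds:
`μ • v ≤ A *ᵥ v` for some nonnegative `v ≠ 0` forces `μ ≤ λ_N`, and `A *ᵥ v ≤ μ • v` forces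
`λ_N ≤ μ`. The constant vector shows `λ_N ≤ N`, every row of `M` summing to at most
`b' + 2a' = 1`. For the lower bound put the parabola `k (K + 1 - k)`, `k = 1, …, K`, on the top
`K` sites: its second difference is `-2` while its values are at least `K`, so `M` scales it by at
least `1 - 2a'/K`, and `D` by at least `N - K` there. Hence `(N - K)(1 - 2a'/K) ≤ λ_N`, and
letting `N → ∞`, then `K → ∞`, gives `λ_N / N → 1`.
-/

/-- The 1-locus operator `Sel·Mut_{a'a'}` on `{1,...,N}` (index `i : Fin N`
represents fitness `i + 1`): tridiagonal mutation with equal up/down rates `a'`,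
diagonal `b'`, followed by fitness-proportional selection. -/
noncomputable def selMut1 (a' b' : ℝ) (N : ℕ) : Matrix (Fin N) (Fin N) ℝ :=
  Matrix.of fun i j => (((i : ℕ) : ℝ) + 1) *
    (if i = j then b' else if (j : ℕ) = (i : ℕ) + 1 then a'
      else if (i : ℕ) = (j : ℕ) + 1 then a' else 0)

theorem dotProduct_mulVec_of_vecMul_eq_smul {ι R : Type*} [Fintype ι] [CommSemiring R]
    {A : Matrix ι ι R} {w : ι → R} {r : R} (hwA : w ᵥ* A = r • w) (v : ι → R) :
    w ⬝ᵥ (A *ᵥ v) = r * (w ⬝ᵥ v) := by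
  rw [dotProduct_mulVec, hwA, smul_dotProduct, smul_eq_mul]

section CollatzWielandt

variable {ι R : Type*} [Fintype ι] [CommRing R] [LinearOrder R] [IsStrictOrderedRing R]
  {A : Matrix ι ι R} {w v : ι → R} {r μ : R}

theorem dotProduct_pos_of_pos_of_nonneg (hw : ∀ i, 0 < w i) (hv : 0 ≤ v) (hv0 : v ≠ 0) :
    0 < w ⬝ᵥ v := by
  obtain ⟨i, hi⟩ := Function.ne_iff.mp hv0
  exact Finset.sum_pos' (fun j _ => mul_nonneg (hw j).le (hv j))
    ⟨i, Finset.mem_univ _, mul_pos (hw i) ((hv i).lt_of_ne' hi)⟩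

theorem le_of_smul_le_mulVec (hw : ∀ i, 0 < w i) (hwA : w ᵥ* A = r • w) (hv : 0 ≤ v)
    (hv0 : v ≠ 0) (h : μ • v ≤ A *ᵥ v) : μ ≤ r := by
  have hle := dotProduct_le_dotProduct_of_nonneg_left h fun i => (hw i).le
  rw [dotProduct_smul, dotProduct_mulVec_of_vecMul_eq_smul hwA, smul_eq_mul] at hle
  exact le_of_mul_le_mul_right hle (dotProduct_pos_of_pos_of_nonneg hw hv hv0)

theorem le_of_mulVec_le_smul (hw : ∀ i, 0 < w i) (hwA : w ᵥ* A = r • w) (hv : 0 ≤ v)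
    (hv0 : v ≠ 0) (h : A *ᵥ v ≤ μ • v) : r ≤ μ := by
  have hle := dotProduct_le_dotProduct_of_nonneg_left h fun i => (hw i).le
  rw [dotProduct_smul, dotProduct_mulVec_of_vecMul_eq_smul hwA, smul_eq_mul] at hle
  exact le_of_mul_le_mul_right hle (dotProduct_pos_of_pos_of_nonneg hw hv hv0)

end CollatzWielandt

theorem vecMul_diagonal_mul_eq_smul {ι K : Type*} [Fintype ι] [DecidableEq ι] [Field K]
    {d ψ : ι → K} {M : Matrix ι ι K} {r : K} (hd : ∀ i, d i ≠ 0) (hM : M.IsSymm)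
    (h : (diagonal d * M) *ᵥ ψ = r • ψ) : (ψ / d) ᵥ* (diagonal d * M) = r • (ψ / d) := by
  have hMψ : M *ᵥ ψ = r • (ψ / d) := by
    funext i
    have hi := congrFun h i
    rw [← mulVec_mulVec, mulVec_diagonal] at hi
    rw [Pi.smul_apply, Pi.div_apply, smul_eq_mul, mul_div_assoc', eq_div_iff (hd i), mul_comm, hi,
      Pi.smul_apply, smul_eq_mul]
  have hψd : (ψ / d) ᵥ* diagonal d = ψ := by
    funext i; rw [vecMul_diagonal, Pi.div_apply, div_mul_cancel₀ _ (hd i)]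
  rw [← vecMul_vecMul, hψd, ← hMψ, ← vecMul_transpose, hM.eq]

def mut1 (a' b' : ℝ) (N : ℕ) : Matrix (Fin N) (Fin N) ℝ :=
  of fun i j => if i = j then b' else if (j : ℕ) = i + 1 then a'
    else if (i : ℕ) = j + 1 then a' else 0

section Mut

variable {a' b' : ℝ} {N : ℕ}

theorem mut1_isSymm : (mut1 a' b' N).IsSymm :=
  IsSymm.ext fun i j => by
    simp only [mut1, of_apply, Fin.ext_iff]
    split_ifs <;> first | rfl | omega

theorem selMut1_eq_diagonal_mul_mut1 :
    selMut1 a' b' N = diagonal (fun i : Fin N => ((i : ℕ) : ℝ) + 1) * mut1 a' b' N := by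
  ext i j
  simp [selMut1, mut1, diagonal_mul]

theorem mut1_mulVec_apply {V : ℤ → ℝ} (h₀ : V (-1) = 0) (hN : V N = 0) (i : Fin N) :
    (mut1 a' b' N *ᵥ fun j => V j) i = b' * V i + a' * (V (i - 1) + V (i + 1)) := by
  have hterm : ∀ j : ℕ, (if (i : ℕ) = j then b' else if j = i + 1 then a'
      else if (i : ℕ) = j + 1 then a' else 0) * V j =
      (if (i : ℕ) = j then b' * V i else 0) + (if (i : ℕ) + 1 = j then a' * V (i + 1) else 0)
        + (if j + 1 = (i : ℕ) then a' * V (i - 1) else 0) := by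
    intro j
    split_ifs <;> (try simp only [add_zero, zero_add, zero_mul]) <;>
      first | (exfalso; omega) | (congr 2; omega)
  simp only [mulVec, dotProduct, mut1, of_apply, Fin.ext_iff]
  rw [Fin.sum_univ_eq_sum_range (fun j => (if (i : ℕ) = j then b' else if j = i + 1 then a'
      else if (i : ℕ) = j + 1 then a' else 0) * V j)]
  simp only [hterm, Finset.sum_add_distrib, Finset.sum_ite_eq, Finset.mem_range, i.isLt, if_true]
  have hup : (if (i : ℕ) + 1 < N then a' * V (i + 1) else 0) = a' * V (i + 1) := by
    split_ifs with h
    · rfl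
    · rw [show ((i : ℕ) : ℤ) + 1 = N by omega, hN, mul_zero]
  have hdown : ∑ j ∈ Finset.range N, (if j + 1 = (i : ℕ) then a' * V (i - 1) else 0)
      = a' * V (i - 1) := by
    rcases Nat.eq_zero_or_pos (i : ℕ) with h | h
    · simp [h, h₀]
    · simp only [show ∀ j, j + 1 = (i : ℕ) ↔ j = (i : ℕ) - 1 by omega, Finset.sum_ite_eq',
        Finset.mem_range, show (i : ℕ) - 1 < N by omega, if_true]
  rw [hup, hdown]
  ring

end Mut

def bump (K : ℕ) (k : ℤ) : ℝ := max 0 (k * (K + 1 - k))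

section Bump

variable {K : ℕ} {k : ℤ}

theorem bump_nonneg : 0 ≤ bump K k := le_max_left _ _

theorem bump_eq_zero (hk : k ≤ 0 ∨ K + 1 ≤ k) : bump K k = 0 := by
  refine max_eq_left ?_
  have hk' : (k : ℝ) ≤ 0 ∨ (K : ℝ) + 1 ≤ k := by exact_mod_cast hk
  rcases hk' with hk' | hk' <;> nlinarith

theorem bump_self : bump K K = K := by
  simp [bump]

theorem one_le_of_bump_pos (h : 0 < bump K k) : 1 ≤ k := by
  by_contra! hk
  exact h.ne' (bump_eq_zero (Or.inl (by omega)))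

theorem le_bump_sub_one_add_bump_add_one (hK : 1 ≤ K) :
    2 * (1 - 1 / K) * bump K k ≤ bump K (k - 1) + bump K (k + 1) := by
  have hK' : (1 : ℝ) ≤ K := by exact_mod_cast hK
  by_cases hk : k ≤ 0 ∨ K + 1 ≤ k
  · rw [bump_eq_zero hk, mul_zero]
    exact add_nonneg bump_nonneg bump_nonneg
  · push Not at hk
    have h1 : (1 : ℝ) ≤ k := by exact_mod_cast hk.1
    have h2 : (k : ℝ) ≤ K := by exact_mod_cast (by omega : k ≤ K)
    have hk_eq : bump K k = k * (K + 1 - k) := max_eq_right (by nlinarith)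
    have hprev : ((k - 1 : ℤ) : ℝ) * (K + 1 - (k - 1 : ℤ)) ≤ bump K (k - 1) := le_max_right _ _
    have hnext : ((k + 1 : ℤ) : ℝ) * (K + 1 - (k + 1 : ℤ)) ≤ bump K (k + 1) := le_max_right _ _
    push_cast at hprev hnext
    have hg : 1 ≤ k * (K + 1 - k) / (K : ℝ) := (one_le_div (by linarith)).2 (by nlinarith)
    have hsum : ((k : ℝ) - 1) * (K + 1 - (k - 1)) + (k + 1) * (K + 1 - (k + 1))
        = 2 * (k * (K + 1 - k)) - 2 := by ring
    have hlhs : 2 * (1 - 1 / (K : ℝ)) * (k * (K + 1 - k))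
        = 2 * (k * (K + 1 - k)) - 2 * (k * (K + 1 - k) / K) := by ring
    rw [hk_eq, hlhs]
    linarith

end Bump

section Eigenvalue

variable {a' b' r : ℝ} {N : ℕ} {ψ : Fin N → ℝ}

theorem exists_pos_vecMul_selMut1_eq_smul (hψ : ∀ i, 0 < ψ i)
    (h : selMut1 a' b' N *ᵥ ψ = r • ψ) :
    ∃ w : Fin N → ℝ, (∀ i, 0 < w i) ∧ w ᵥ* selMut1 a' b' N = r • w := by
  rw [selMut1_eq_diagonal_mul_mut1] at h ⊢
  exact ⟨_, fun i => div_pos (hψ i) (by positivity),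
    vecMul_diagonal_mul_eq_smul (fun i => by positivity) mut1_isSymm h⟩

theorem selMut1_mulVec_apply {V : ℤ → ℝ} (h₀ : V (-1) = 0) (hN : V N = 0) (i : Fin N) :
    (selMut1 a' b' N *ᵥ fun j => V j) i
      = ((i : ℕ) + 1) * (b' * V i + a' * (V (i - 1) + V (i + 1))) := by
  rw [selMut1_eq_diagonal_mul_mut1, ← mulVec_mulVec, mulVec_diagonal, mut1_mulVec_apply h₀ hN]

theorem selMut1_eigenvalue_le (ha : 0 ≤ a') (hsum : 2 * a' + b' = 1) (hN : 0 < N)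
    (hψ : ∀ i, 0 < ψ i) (h : selMut1 a' b' N *ᵥ ψ = r • ψ) : r ≤ N := by
  obtain ⟨w, hw, hwA⟩ := exists_pos_vecMul_selMut1_eq_smul hψ h
  let V : ℤ → ℝ := fun m => if 0 ≤ m ∧ m < N then 1 else 0
  have hV : ∀ i : Fin N, V i = 1 := fun i => if_pos ⟨by omega, by omega⟩
  refine le_of_mulVec_le_smul (v := fun j : Fin N => V j) hw hwA
    (fun i => (hV i).ge.trans' zero_le_one)
    (Function.ne_iff.mpr ⟨⟨0, hN⟩, (hV _).symm ▸ one_ne_zero⟩) fun i => ?_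
  have hV₁ : ∀ m, V m ≤ 1 := fun m => by dsimp only [V]; split_ifs <;> norm_num
  have hi : ((i : ℕ) : ℝ) + 1 ≤ N := by exact_mod_cast i.isLt
  rw [selMut1_mulVec_apply (by simp [V]) (by simp [V]), Pi.smul_apply, hV, smul_eq_mul]
  simp only [mul_one]
  calc ((i : ℕ) + 1) * (b' + a' * (V (i - 1) + V (i + 1)))
      ≤ ((i : ℕ) + 1) * (b' + a' * (1 + 1)) := by
        gcongr <;> exact hV₁ _
    _ = (i : ℕ) + 1 := by linear_combination (((i : ℕ) : ℝ) + 1) * hsum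
    _ ≤ N := hi

theorem le_selMut1_eigenvalue (ha : 0 ≤ a') (hsum : 2 * a' + b' = 1) {K : ℕ}
    (hK : 1 ≤ K) (haK : 2 * a' ≤ K) (hKN : K < N) (hψ : ∀ i, 0 < ψ i)
    (h : selMut1 a' b' N *ᵥ ψ = r • ψ) : (N - K) * (1 - 2 * a' / K) ≤ r := by
  obtain ⟨w, hw, hwA⟩ := exists_pos_vecMul_selMut1_eq_smul hψ h
  have hc : 0 ≤ 1 - 2 * a' / K := sub_nonneg.2 ((div_le_one (by positivity)).2 haK)
  let V : ℤ → ℝ := fun m => bump K (m - N + K + 1)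
  have hV₀ : V (-1) = 0 := bump_eq_zero (Or.inl (by omega))
  have hVN : V N = 0 := bump_eq_zero (Or.inr (by omega))
  have hVtop : V (N - 1 : ℕ) ≠ 0 := by
    simp only [V, show ((N - 1 : ℕ) : ℤ) - N + K + 1 = K by omega, bump_self]
    positivity
  refine le_of_smul_le_mulVec (v := fun j : Fin N => V j) hw hwA (fun i => bump_nonneg)
    (Function.ne_iff.mpr ⟨⟨N - 1, by omega⟩, hVtop⟩) fun i => ?_
  rw [selMut1_mulVec_apply hV₀ hVN, Pi.smul_apply, smul_eq_mul]
  have hnb : 2 * (1 - 1 / K) * V i ≤ V (i - 1) + V (i + 1) := by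
    have := le_bump_sub_one_add_bump_add_one (k := (i : ℤ) - N + K + 1) hK
    rwa [show (i : ℤ) - N + K + 1 - 1 = (i - 1) - N + K + 1 by ring,
      show (i : ℤ) - N + K + 1 + 1 = (i + 1) - N + K + 1 by ring] at this
  have hmut : (1 - 2 * a' / K) * V i ≤ b' * V i + a' * (V (i - 1) + V (i + 1)) :=
    calc (1 - 2 * a' / K) * V i = b' * V i + a' * (2 * (1 - 1 / K) * V i) := by
          linear_combination (-V i) * hsum
      _ ≤ b' * V i + a' * (V (i - 1) + V (i + 1)) := by gcongr
  have hsupp : ((N : ℝ) - K) * V i ≤ ((i : ℕ) + 1) * V i := by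
    rcases (show 0 ≤ V i from bump_nonneg).eq_or_lt with hVi | hVi
    · simp [← hVi]
    · have hk := one_le_of_bump_pos hVi
      have hNi : (N : ℝ) - K ≤ (i : ℕ) + 1 := by
        exact_mod_cast (by omega : (N : ℤ) - K ≤ (i : ℕ) + 1)
      exact mul_le_mul_of_nonneg_right hNi hVi.le
  calc (N - K) * (1 - 2 * a' / K) * V i = (1 - 2 * a' / K) * ((N - K) * V i) := by ring
    _ ≤ (1 - 2 * a' / K) * (((i : ℕ) + 1) * V i) := by gcongr
    _ = ((i : ℕ) + 1) * ((1 - 2 * a' / K) * V i) := by ring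
    _ ≤ _ := by gcongr

end Eigenvalue

theorem exists_nat_lt_one_sub_div (c : ℝ) {u : ℝ} (hu : u < 1) :
    ∃ K : ℕ, 1 ≤ K ∧ c ≤ K ∧ u < 1 - c / K := by
  have hlim : Tendsto (fun K : ℕ => 1 - c / K) atTop (nhds 1) := by
    simpa using tendsto_const_nhds.sub (tendsto_const_div_atTop_nhds_zero_nat c)
  exact ((eventually_ge_atTop 1).and ((tendsto_natCast_atTop_atTop.eventually_ge_atTop c).and
    (hlim.eventually_const_lt hu))).exists

theorem symmetric_perron_eigenvalue_limit_general (a' b' : ℝ) (ha : 0 < a')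
    (hsum : 2 * a' + b' = 1)
    (lam : ℕ → ℝ) (ψ : (N : ℕ) → Fin N → ℝ)
    (h : ∀ N, 1 ≤ N → (∀ x, 0 < ψ N x) ∧
      (selMut1 a' b' N).mulVec (ψ N) = lam N • ψ N) :
    Tendsto (fun N => lam N / (N : ℝ)) atTop (nhds 1) := by
  refine tendsto_order.2 ⟨fun u hu => ?_, fun u hu => ?_⟩
  · obtain ⟨K, hK, haK, huK⟩ := exists_nat_lt_one_sub_div (2 * a') hu
    have hlim : Tendsto (fun N : ℕ => (1 - K / N) * (1 - 2 * a' / K)) atTop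
        (nhds (1 - 2 * a' / K)) := by
      simpa using ((tendsto_const_nhds (x := (1 : ℝ))).sub
        (tendsto_const_div_atTop_nhds_zero_nat (K : ℝ))).mul_const (1 - 2 * a' / K)
    filter_upwards [hlim.eventually_const_lt huK, eventually_gt_atTop K] with N huN hKN
    obtain ⟨hψ, heig⟩ := h N (by omega)
    have hN : (0 : ℝ) < N := by exact_mod_cast (show 0 < N by omega)
    calc u < (1 - K / N) * (1 - 2 * a' / K) := huN
      _ = (N - K) * (1 - 2 * a' / K) / N := by field_simp
      _ ≤ lam N / N := by
        gcongr
        exact le_selMut1_eigenvalue ha.le hsum hK haK hKN hψ heig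
  · filter_upwards [eventually_ge_atTop 1] with N hN
    obtain ⟨hψ, heig⟩ := h N hN
    calc lam N / N ≤ 1 :=
          div_le_one_of_le₀ (selMut1_eigenvalue_le ha.le hsum hN hψ heig) (Nat.cast_nonneg N)
      _ < u := hu

/-- for the symmetric 1-locus process, the Perron eigenvalue `λ_N`
(the eigenvalue of a strictly positive eigenvector) satisfies `λ_N / N → 1`. -/
theorem symmetric_perron_eigenvalue_limit (a' b' : ℝ) (ha : 0 < a')
    (hab : a' < b') (hsum : 2 * a' + b' = 1)
    (lam : ℕ → ℝ) (ψ : (N : ℕ) → Fin N → ℝ)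
    (h : ∀ N, 1 ≤ N → (∀ x, 0 < ψ N x) ∧
      (selMut1 a' b' N).mulVec (ψ N) = lam N • ψ N) :
    Tendsto (fun N => lam N / (N : ℝ)) atTop (nhds 1) :=
  symmetric_perron_eigenvalue_limit_general a' b' ha hsum lam ψ h
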